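/- Let 4 ≤ p_1 ≤ p_2, and let G* be a graph containing a spanning subgraph H = H_1 ∨ (H_2 ∪ H_3) where H_1 ≅ K_{p_1-2}, H_2 ≅ K_{p_2}, and H_3 is an empty graph on the remaining vertices. Assume K_{p_1} ∪ K_{p_2} is not a subgraph of G*, there is a vertex v ∈ V(H_3) with N_{G*}(v) = V(H_1), and for every vertex w' ∉ V(H_1) ∪ {v}, the graph G* + vw' contains a subgraph isomorphic to K_{p_1} ∪ K_{p_2}. Then the number of edges of G* with both endpoints outside V(H_1) is at least C(p_2+1, 2). -/

import Mathlib

open SimpleGraph Finset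

/-- `H` is a subgraph of `G` (up to isomorphism): an injective homomorphism exists. -/
def IsSubgraphOf {α β : Type*} (H : SimpleGraph α) (G : SimpleGraph β) : Prop :=
  ∃ f : α → β, Function.Injective f ∧ ∀ a b, H.Adj a b → G.Adj (f a) (f b)

/-- `G` is `H`-saturated. -/
def IsSat {α β : Type*} (G : SimpleGraph α) (H : SimpleGraph β) : Prop :=
  ¬ IsSubgraphOf H G ∧
    ∀ u v : α, u ≠ v → ¬ G.Adj u v →
      IsSubgraphOf H (G ⊔ SimpleGraph.fromEdgeSet {s(u, v)})

/-- First position of block `i` (for `2 ≤ i`) in `H(n; p₁, …, p_t)`. -/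
def blockStart (p : ℕ → ℕ) (i : ℕ) : ℕ :=
  (p 1 - 2) + ∑ j ∈ Finset.Ico 2 i, (p j + 1)

def inBlock (p : ℕ → ℕ) (i : ℕ) (a : ℕ) : Prop :=
  blockStart p i ≤ a ∧ a < blockStart p i + (p i + 1)

/-- `H(n; p₁, …, p_t) = K_{p₁-2} ∨ (K_{p₂+1} ∪ ⋯ ∪ K_{p_t+1} ∪ I_m)`. -/
def Hgraph (n t : ℕ) (p : ℕ → ℕ) : SimpleGraph (Fin n) :=
  SimpleGraph.fromRel (fun u v =>
    (u : ℕ) < p 1 - 2 ∨ ∃ i, 2 ≤ i ∧ i ≤ t ∧ inBlock p i (u : ℕ) ∧ inBlock p i (v : ℕ))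

/-- The disjoint union `K_{p₁} ∪ K_{p₂} ∪ ⋯ ∪ K_{p_t}`. -/
def cliqueUnion (t : ℕ) (p : ℕ → ℕ) :
    SimpleGraph (Σ i : Fin t, Fin (p ((i : ℕ) + 1))) where
  Adj a b := a ≠ b ∧ a.1 = b.1
  symm := ⟨fun a b h => ⟨h.1.symm, h.2.symm⟩⟩
  loopless := ⟨fun a h => h.1 rfl⟩

/-- The disjoint union `K_{p₂} ∪ ⋯ ∪ K_{p_t}`. -/
def cliqueUnionTail (t : ℕ) (p : ℕ → ℕ) :
    SimpleGraph (Σ i : Fin (t - 1), Fin (p ((i : ℕ) + 2))) where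
  Adj a b := a ≠ b ∧ a.1 = b.1
  symm := ⟨fun a b h => ⟨h.1.symm, h.2.symm⟩⟩
  loopless := ⟨fun a h => h.1 rfl⟩

/-! ### Auxiliary edge-counting machinery -/

/-- The set of (non-loop) edges spanned by a finset of vertices. -/
def edgesOf {V : Type*} [DecidableEq V] (s : Finset V) : Finset (Sym2 V) :=
  s.offDiag.image Sym2.mk.uncurry

lemma mem_edgesOf {V : Type*} [DecidableEq V] {s : Finset V} {e : Sym2 V} :
    e ∈ edgesOf s ↔ ¬ e.IsDiag ∧ ∀ x ∈ e, x ∈ s := by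
  induction e using Sym2.inductionOn with
  | hf a b =>
    simp only [edgesOf, mem_image, Finset.mem_offDiag, Sym2.mk_isDiag_iff, Sym2.mem_iff,
      Prod.exists, Sym2.eq_iff, Function.uncurry_apply_pair]
    constructor
    · rintro ⟨x, y, ⟨hx, hy, hxy⟩, (⟨rfl, rfl⟩ | ⟨rfl, rfl⟩)⟩ <;>
        exact ⟨by tauto, by rintro z (rfl | rfl) <;> assumption⟩
    · rintro ⟨hne, hmem⟩
      exact ⟨a, b, ⟨hmem a (Or.inl rfl), hmem b (Or.inr rfl), hne⟩, Or.inl ⟨rfl, rfl⟩⟩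

lemma card_edgesOf {V : Type*} [DecidableEq V] (s : Finset V) :
    (edgesOf s).card = s.card.choose 2 := by
  have hu := Finset.image_diag_union_image_offDiag (s := s)
  have hdisj : Disjoint (s.diag.image Sym2.mk.uncurry) (s.offDiag.image Sym2.mk.uncurry) := by
    rw [Finset.disjoint_left]
    rintro e he he'
    obtain ⟨a, ha, rfl⟩ := mem_image.1 he
    obtain ⟨b, hb, hab⟩ := mem_image.1 he'
    exact Finset.not_isDiag_mk_of_mem_offDiag hb (hab ▸ (Finset.isDiag_mk_of_mem_diag ha : (Sym2.mk.uncurry a).IsDiag) :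
      (Sym2.mk.uncurry b).IsDiag)
  have hcard : (s.diag.image Sym2.mk.uncurry).card = s.card := by
    rw [Finset.card_image_of_injOn, Finset.diag_card]
    rintro ⟨a, a'⟩ ha ⟨b, b'⟩ hb hab
    have ha2 := (Finset.mem_diag.1 ha).2
    have hb2 := (Finset.mem_diag.1 hb).2
    simp only at ha2 hb2
    subst ha2; subst hb2
    simp only [Function.uncurry_apply_pair, Sym2.eq_iff] at hab
    simp only [Prod.mk.injEq]
    tauto
  have h2 := Finset.card_union_of_disjoint hdisj
  rw [hu, Finset.card_sym2, hcard] at h2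
  have h3 : (s.card + 1).choose 2 = s.card.choose 1 + s.card.choose 2 :=
    Nat.choose_succ_succ _ _
  rw [Nat.choose_one_right] at h3
  unfold edgesOf
  omega

lemma choose_two_succ (n : ℕ) : (n + 1).choose 2 = n.choose 2 + n := by
  rw [Nat.choose_succ_succ, Nat.choose_one_right, Nat.add_comm]

/-- Lower bound the number of edges of an induced graph by a finset of edges lying inside. -/
lemma card_le_ncard_edgeSet {V : Type*} [Fintype V] (Gs : SimpleGraph V) (S : Set V)
    (E : Finset (Sym2 V)) (hE : ∀ e ∈ E, e ∈ Gs.edgeSet ∧ ∀ x ∈ e, x ∈ Sᶜ) :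
    E.card ≤ (Gs.induce Sᶜ).edgeSet.ncard := by
  classical
  have hmap : (E : Set (Sym2 V)) ⊆ Sym2.map (Subtype.val) '' (Gs.induce Sᶜ).edgeSet := by
    have key : ∀ a b : V, s(a, b) ∈ E →
        s(a, b) ∈ Sym2.map (Subtype.val) '' (Gs.induce Sᶜ).edgeSet := by
      intro a b hab
      obtain ⟨he1, he2⟩ := hE _ hab
      have ha : a ∈ Sᶜ := he2 a (Sym2.mem_mk_left a b)
      have hb : b ∈ Sᶜ := he2 b (Sym2.mem_mk_right a b)
      have hadj : Gs.Adj a b := he1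
      refine ⟨s((⟨a, ha⟩ : (Sᶜ : Set V)), (⟨b, hb⟩ : (Sᶜ : Set V))), ?_, ?_⟩
      · exact hadj
      · rfl
    intro e he
    induction e using Sym2.inductionOn with
    | hf a b => exact key a b he
  calc E.card = (E : Set (Sym2 V)).ncard := (Set.ncard_coe_finset E).symm
    _ ≤ (Sym2.map (Subtype.val) '' (Gs.induce Sᶜ).edgeSet).ncard :=
        Set.ncard_le_ncard hmap ((Set.toFinite _).image _)
    _ ≤ (Gs.induce Sᶜ).edgeSet.ncard := Set.ncard_image_le (Set.toFinite _)

/-- Key extraction: from a copy of `K_{p₁} ∪ K_{p₂}` in `Gs + vw'`, produce a `p₂`-clique of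
`Gs` avoiding `S1 ∪ {v, w'}`. -/
lemma extract_clique {V : Type*} [Fintype V] {p1 p2 : ℕ}
    (hp1 : 4 ≤ p1) (hp12 : p1 ≤ p2)
    {Gs : SimpleGraph V} {S1 : Set V}
    (hS1card : S1.ncard = p1 - 2)
    (hfree : ¬ IsSubgraphOf (cliqueUnion 2 (fun i => if i = 1 then p1 else p2)) Gs)
    {v : V} (hvS1 : v ∉ S1) (hNv : Gs.neighborSet v = S1)
    {w' : V} (hw1 : w' ∉ S1) (hw2 : w' ≠ v)
    (hsub : IsSubgraphOf (cliqueUnion 2 (fun i => if i = 1 then p1 else p2))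
        (Gs ⊔ SimpleGraph.fromEdgeSet {s(v, w')})) :
    ∃ Q : Finset V, Q.card = p2 ∧ (∀ a ∈ Q, ∀ b ∈ Q, a ≠ b → Gs.Adj a b) ∧
      ∀ q ∈ Q, q ∉ S1 ∧ q ≠ v ∧ q ≠ w' := by
  classical
  obtain ⟨f, finj, fadj⟩ := hsub
  set P : ℕ → ℕ := fun i => if i = 1 then p1 else p2 with hPdef
  have hadj' : ∀ a b : (Σ i : Fin 2, Fin (P ((i : ℕ) + 1))), a ≠ b → a.1 = b.1 →
      Gs.Adj (f a) (f b) ∨ f a = v ∧ f b = w' ∨ f a = w' ∧ f b = v := by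
    intro a b hne hfst
    have h := fadj a b (show a ≠ b ∧ a.1 = b.1 from ⟨hne, hfst⟩)
    rw [SimpleGraph.sup_adj, SimpleGraph.fromEdgeSet_adj] at h
    rcases h with h | ⟨h, _⟩
    · exact Or.inl h
    · simp only [Set.mem_singleton_iff, Sym2.eq_iff] at h
      tauto
  by_cases hvim : ∃ a, f a = v
  swap
  · push_neg at hvim
    refine absurd ⟨f, finj, fun a b hab => ?_⟩ hfree
    rcases hadj' a b (show a ≠ b ∧ a.1 = b.1 from hab).1 (show a ≠ b ∧ a.1 = b.1 from hab).2 with h | ⟨h, _⟩ | ⟨_, h⟩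
    · exact h
    · exact absurd h (hvim a)
    · exact absurd h (hvim b)
  obtain ⟨a₀, ha₀⟩ := hvim
  -- the two blocks
  set e0 : Fin p1 → (Σ i : Fin 2, Fin (P ((i : ℕ) + 1))) := fun j => ⟨0, j⟩ with he0
  set e1 : Fin p2 → (Σ i : Fin 2, Fin (P ((i : ℕ) + 1))) := fun j => ⟨1, j⟩ with he1
  set B0 : Finset V := Finset.image (fun j => f (e0 j)) Finset.univ with hB0
  set B1 : Finset V := Finset.image (fun j => f (e1 j)) Finset.univ with hB1
  have hB0card : B0.card = p1 := by
    rw [hB0, Finset.card_image_of_injective _ (fun j k h => ?_), Finset.card_univ,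
      Fintype.card_fin]
    have h2 := finj h
    obtain ⟨-, h3⟩ := Sigma.mk.inj_iff.1 h2
    exact eq_of_heq h3
  have hB1card : B1.card = p2 := by
    rw [hB1, Finset.card_image_of_injective _ (fun j k h => ?_), Finset.card_univ,
      Fintype.card_fin]
    have h2 := finj h
    obtain ⟨-, h3⟩ := Sigma.mk.inj_iff.1 h2
    exact eq_of_heq h3
  have hdisjB : Disjoint B0 B1 := by
    rw [Finset.disjoint_left]
    rintro a ha ha'
    obtain ⟨j, -, rfl⟩ := Finset.mem_image.1 ha
    obtain ⟨k, -, hk⟩ := Finset.mem_image.1 ha'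
    have := finj hk
    have h01 : (e1 k).1 = (e0 j).1 := by rw [this]
    simp [he0, he1] at h01
  have hB0adj : ∀ a ∈ B0, ∀ b ∈ B0, a ≠ b →
      Gs.Adj a b ∨ a = v ∧ b = w' ∨ a = w' ∧ b = v := by
    rintro a ha b hb hne
    obtain ⟨j, -, rfl⟩ := Finset.mem_image.1 ha
    obtain ⟨k, -, rfl⟩ := Finset.mem_image.1 hb
    exact hadj' _ _ (fun h => hne (congrArg f h)) rfl
  have hB1adj : ∀ a ∈ B1, ∀ b ∈ B1, a ≠ b →
      Gs.Adj a b ∨ a = v ∧ b = w' ∨ a = w' ∧ b = v := by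
    rintro a ha b hb hne
    obtain ⟨j, -, rfl⟩ := Finset.mem_image.1 ha
    obtain ⟨k, -, rfl⟩ := Finset.mem_image.1 hb
    exact hadj' _ _ (fun h => hne (congrArg f h)) rfl
  -- the common core, applied to (C, D) = (B0, B1) or (B1, B0)
  have main : ∀ C D : Finset V,
      (∀ a ∈ C, ∀ b ∈ C, a ≠ b → Gs.Adj a b ∨ a = v ∧ b = w' ∨ a = w' ∧ b = v) →
      (∀ a ∈ D, ∀ b ∈ D, a ≠ b → Gs.Adj a b ∨ a = v ∧ b = w' ∨ a = w' ∧ b = v) →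
      Disjoint C D → v ∈ C → p1 ≤ C.card → C.card + D.card = p1 + p2 →
      ∃ Q : Finset V, Q.card = p2 ∧ (∀ a ∈ Q, ∀ b ∈ Q, a ≠ b → Gs.Adj a b) ∧
        ∀ q ∈ Q, q ∉ S1 ∧ q ≠ v ∧ q ≠ w' := by
    intro C D hC hD hCD hvC hCcard hsum
    have hS1fin : S1.Finite := Set.toFinite _
    set S1f : Finset V := hS1fin.toFinset with hS1f
    have hS1fcard : S1f.card = p1 - 2 := by
      rw [hS1f, ← Set.ncard_eq_toFinset_card _ hS1fin, hS1card]
    have hmemS1f : ∀ x, x ∈ S1f ↔ x ∈ S1 := fun x => hS1fin.mem_toFinset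
    set Sall : Finset V := insert v (insert w' S1f) with hSall
    have hSallcard : Sall.card = p1 := by
      rw [hSall, Finset.card_insert_of_notMem, Finset.card_insert_of_notMem]
      · omega
      · rw [hmemS1f]; exact hw1
      · simp only [Finset.mem_insert, hmemS1f]
        push_neg
        exact ⟨hw2.symm, hvS1⟩
    have hCsub : C ⊆ Sall := by
      intro u hu
      by_cases huv : u = v
      · subst huv; exact Finset.mem_insert_self _ _
      rcases hC v hvC u hu (fun h => huv h.symm) with h | ⟨-, h⟩ | ⟨h, -⟩
      · have : u ∈ S1 := by rw [← hNv]; exact h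
        exact Finset.mem_insert_of_mem (Finset.mem_insert_of_mem ((hmemS1f u).2 this))
      · subst h; exact Finset.mem_insert_of_mem (Finset.mem_insert_self _ _)
      · exact absurd h.symm hw2
    have hCeq : C = Sall := Finset.eq_of_subset_of_card_le hCsub (by omega)
    have hCcard' : C.card = p1 := by rw [hCeq, hSallcard]
    have hDcard : D.card = p2 := by omega
    refine ⟨D, hDcard, ?_, ?_⟩
    · intro a ha b hb hne
      have hav : a ≠ v := fun h => (Finset.disjoint_right.1 hCD) ha (h ▸ hvC)
      have hbv : b ≠ v := fun h => (Finset.disjoint_right.1 hCD) hb (h ▸ hvC)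
      rcases hD a ha b hb hne with h | ⟨h, -⟩ | ⟨-, h⟩
      · exact h
      · exact absurd h hav
      · exact absurd h hbv
    · intro q hq
      have hqC : q ∉ C := Finset.disjoint_right.1 hCD hq
      rw [hCeq, hSall] at hqC
      simp only [Finset.mem_insert, hmemS1f, not_or] at hqC
      exact ⟨hqC.2.2, hqC.1, hqC.2.1⟩
  -- identify which block contains v
  obtain ⟨⟨i, hi⟩, j⟩ := a₀
  interval_cases i
  · have hvB0 : v ∈ B0 := by
      rw [← ha₀]
      exact Finset.mem_image_of_mem _ (Finset.mem_univ j)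
    exact main B0 B1 hB0adj hB1adj hdisjB hvB0 (le_of_eq hB0card.symm) (by omega)
  · have hvB1 : v ∈ B1 := by
      rw [← ha₀]
      exact Finset.mem_image_of_mem _ (Finset.mem_univ j)
    exact main B1 B0 hB1adj hB0adj hdisjB.symm hvB1 (by omega) (by omega)

/-- Claim 1: with the split-like structure and the saturation property of the
non-neighbor `v`, the edges outside `V(H₁)` number at least `C(p₂+1, 2)`. -/
theorem claim_two_cliques {V : Type*} [Fintype V] (p1 p2 : ℕ)
    (hp1 : 4 ≤ p1) (hp12 : p1 ≤ p2)
    (Gs : SimpleGraph V) (S1 B2 : Set V)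
    (hS1card : S1.ncard = p1 - 2) (hB2card : B2.ncard = p2)
    (hdisj : Disjoint S1 B2)
    (hS1clique : ∀ a ∈ S1, ∀ b ∈ S1, a ≠ b → Gs.Adj a b)
    (hB2clique : ∀ a ∈ B2, ∀ b ∈ B2, a ≠ b → Gs.Adj a b)
    (hjoin : ∀ a ∈ S1, ∀ b, b ∉ S1 → Gs.Adj a b)
    (hfree : ¬ IsSubgraphOf (cliqueUnion 2 (fun i => if i = 1 then p1 else p2)) Gs)
    (v : V) (hv : v ∉ S1 ∪ B2) (hNv : Gs.neighborSet v = S1)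
    (hsatur : ∀ w', w' ∉ S1 → w' ≠ v →
      IsSubgraphOf (cliqueUnion 2 (fun i => if i = 1 then p1 else p2))
        (Gs ⊔ SimpleGraph.fromEdgeSet {s(v, w')})) :
    (p2 + 1).choose 2 ≤ (Gs.induce S1ᶜ).edgeSet.ncard := by
  classical
  have hp2 : 4 ≤ p2 := le_trans hp1 hp12
  have hvS1 : v ∉ S1 := fun h => hv (Set.mem_union_left _ h)
  have hvB2 : v ∉ B2 := fun h => hv (Set.mem_union_right _ h)
  have key : ∀ w', w' ∉ S1 → w' ≠ v →
      ∃ Q : Finset V, Q.card = p2 ∧ (∀ a ∈ Q, ∀ b ∈ Q, a ≠ b → Gs.Adj a b) ∧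
        ∀ q ∈ Q, q ∉ S1 ∧ q ≠ v ∧ q ≠ w' :=
    fun w' h1 h2 => extract_clique hp1 hp12 hS1card hfree hvS1 hNv h1 h2 (hsatur w' h1 h2)
  have hB2fin : B2.Finite := Set.toFinite _
  set B2f : Finset V := hB2fin.toFinset with hB2f
  have hmemB2f : ∀ x, x ∈ B2f ↔ x ∈ B2 := fun x => hB2fin.mem_toFinset
  have hB2fcard : B2f.card = p2 := by
    rw [hB2f, ← Set.ncard_eq_toFinset_card _ hB2fin, hB2card]
  have hB2fS1 : ∀ x ∈ B2f, x ∉ S1 := fun x hx =>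
    Set.disjoint_right.1 hdisj ((hmemB2f x).1 hx)
  have hB2fadj : ∀ a ∈ B2f, ∀ b ∈ B2f, a ≠ b → Gs.Adj a b := fun a ha b hb =>
    hB2clique a ((hmemB2f a).1 ha) b ((hmemB2f b).1 hb)
  -- the validity helper
  have hvalid : ∀ s : Finset V, (∀ a ∈ s, ∀ b ∈ s, a ≠ b → Gs.Adj a b) →
      (∀ q ∈ s, q ∉ S1) → ∀ e ∈ edgesOf s, e ∈ Gs.edgeSet ∧ ∀ x ∈ e, x ∈ S1ᶜ := by
    intro s hclique havoid e he
    rw [mem_edgesOf] at he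
    obtain ⟨hnd, hmem⟩ := he
    constructor
    · induction e using Sym2.inductionOn with
      | hf a b =>
        rw [Sym2.mk_isDiag_iff] at hnd
        exact hclique a (hmem a (Sym2.mem_mk_left a b)) b (hmem b (Sym2.mem_mk_right a b)) hnd
    · intro x hx
      exact havoid x (hmem x hx)
  -- pick w ∈ B2
  have hB2ne : B2f.Nonempty := Finset.card_pos.1 (by omega)
  obtain ⟨w, hw⟩ := hB2ne
  have hwS1 : w ∉ S1 := hB2fS1 w hw
  have hwv : w ≠ v := fun h => hvB2 (h ▸ (hmemB2f w).1 hw)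
  obtain ⟨Q', hQ'card, hQ'clique, hQ'avoid⟩ := key w hwS1 hwv
  have hwQ' : w ∉ Q' := fun h => (hQ'avoid w h).2.2 rfl
  have hQ'S1 : ∀ q ∈ Q', q ∉ S1 := fun q hq => (hQ'avoid q hq).1
  have hintsub : B2f ∩ Q' ⊆ B2f.erase w := by
    intro x hx
    rw [Finset.mem_erase]
    exact ⟨fun h => hwQ' (h ▸ (Finset.mem_inter.1 hx).2), (Finset.mem_inter.1 hx).1⟩
  have hint_le : (B2f ∩ Q').card ≤ p2 - 1 := by
    calc (B2f ∩ Q').card ≤ (B2f.erase w).card := Finset.card_le_card hintsub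
      _ = p2 - 1 := by rw [Finset.card_erase_of_mem hw, hB2fcard]
  by_cases hcase : (B2f ∩ Q').card ≤ p2 - 2
  · -- far-apart case
    set E : Finset (Sym2 V) := edgesOf B2f ∪ edgesOf Q' with hE
    have hintE : edgesOf B2f ∩ edgesOf Q' ⊆ edgesOf (B2f ∩ Q') := by
      intro e he
      rw [Finset.mem_inter, mem_edgesOf, mem_edgesOf] at he
      rw [mem_edgesOf]
      exact ⟨he.1.1, fun x hx => Finset.mem_inter.2 ⟨he.1.2 x hx, he.2.2 x hx⟩⟩
    have hintEcard : (edgesOf B2f ∩ edgesOf Q').card ≤ (p2 - 2).choose 2 := by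
      calc (edgesOf B2f ∩ edgesOf Q').card ≤ (edgesOf (B2f ∩ Q')).card :=
            Finset.card_le_card hintE
        _ = (B2f ∩ Q').card.choose 2 := card_edgesOf _
        _ ≤ (p2 - 2).choose 2 := Nat.choose_le_choose _ hcase
    have hsum := Finset.card_union_add_card_inter (edgesOf B2f) (edgesOf Q')
    rw [card_edgesOf, card_edgesOf, hB2fcard, hQ'card] at hsum
    have hEcard : (p2 + 1).choose 2 ≤ E.card := by
      obtain ⟨q, rfl⟩ : ∃ q, p2 = q + 4 := ⟨p2 - 4, by omega⟩
      have h5 : (q + 4 + 1).choose 2 = (q + 2).choose 2 + (3 * q + 9) := by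
        rw [show q + 4 + 1 = (q + 4) + 1 from rfl, choose_two_succ,
          show q + 4 = (q + 3) + 1 from rfl, choose_two_succ,
          show q + 3 = (q + 2) + 1 from rfl, choose_two_succ]
        ring
      have h4 : (q + 4).choose 2 = (q + 2).choose 2 + (2 * q + 5) := by
        rw [show q + 4 = (q + 3) + 1 from rfl, choose_two_succ,
          show q + 3 = (q + 2) + 1 from rfl, choose_two_succ]
        ring
      have h2' : q + 4 - 2 = q + 2 := by omega
      rw [h2'] at hintEcard
      rw [← hE, h4] at hsum
      rw [h5]
      omega
    refine le_trans hEcard (card_le_ncard_edgeSet Gs S1 E ?_)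
    intro e he
    rcases Finset.mem_union.1 he with h | h
    · exact hvalid B2f hB2fadj hB2fS1 e h
    · exact hvalid Q' hQ'clique hQ'S1 e h
  · -- the intersection has size p2 - 1
    have hint_eq : B2f ∩ Q' = B2f.erase w := by
      refine Finset.eq_of_subset_of_card_le hintsub ?_
      rw [Finset.card_erase_of_mem hw, hB2fcard]
      omega
    have heraseQ' : B2f.erase w ⊆ Q' := by
      rw [← hint_eq]; exact Finset.inter_subset_right
    have hsd_card : (Q' \ B2f).card = 1 := by
      have h1 : Q' \ (Q' ∩ B2f) = Q' \ B2f := Finset.sdiff_inter_self_left Q' B2f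
      have h2 : (Q' \ (Q' ∩ B2f)).card = Q'.card - (Q' ∩ B2f).card :=
        Finset.card_sdiff_of_subset Finset.inter_subset_left
      rw [h1] at h2
      rw [Finset.inter_comm, hint_eq, Finset.card_erase_of_mem hw, hB2fcard, hQ'card] at h2
      omega
    obtain ⟨x, hxset⟩ := Finset.card_eq_one.1 hsd_card
    have hxQ' : x ∈ Q' := (Finset.mem_sdiff.1 (hxset ▸ Finset.mem_singleton_self x)).1
    have hxB2f : x ∉ B2f := (Finset.mem_sdiff.1 (hxset ▸ Finset.mem_singleton_self x)).2
    have hxS1 : x ∉ S1 := hQ'S1 x hxQ'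
    -- the x-edges towards B2f.erase w
    set EX : Finset (Sym2 V) := (B2f.erase w).image (fun b => s(x, b)) with hEX
    have hEXcard : EX.card = p2 - 1 := by
      rw [hEX, Finset.card_image_of_injOn, Finset.card_erase_of_mem hw, hB2fcard]
      intro b hb b' hb' hbb
      rw [Sym2.eq_iff] at hbb
      rcases hbb with ⟨-, h⟩ | ⟨h, h'⟩
      · exact h
      · exact absurd (h ▸ (Finset.mem_erase.1 hb').2) hxB2f
    have hEXvalid : ∀ e ∈ EX, e ∈ Gs.edgeSet ∧ ∀ z ∈ e, z ∈ S1ᶜ := by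
      intro e he
      obtain ⟨b, hb, rfl⟩ := Finset.mem_image.1 he
      have hbB2f : b ∈ B2f := (Finset.mem_erase.1 hb).2
      have hbQ' : b ∈ Q' := heraseQ' hb
      have hxb : x ≠ b := fun h => hxB2f (h ▸ hbB2f)
      refine ⟨hQ'clique x hxQ' b hbQ' hxb, ?_⟩
      intro z hz
      rcases Sym2.mem_iff.1 hz with rfl | rfl
      · exact hxS1
      · exact hB2fS1 _ hbB2f
    have hEXdisj : Disjoint (edgesOf B2f) EX := by
      rw [Finset.disjoint_right]
      intro e he he'
      obtain ⟨b, hb, rfl⟩ := Finset.mem_image.1 he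
      exact hxB2f ((mem_edgesOf.1 he').2 x (Sym2.mem_mk_left x b))
    -- second saturation application
    have herasene : (B2f.erase w).Nonempty := by
      rw [← Finset.card_pos, Finset.card_erase_of_mem hw, hB2fcard]; omega
    obtain ⟨w'', hw''⟩ := herasene
    have hw''B2f : w'' ∈ B2f := (Finset.mem_erase.1 hw'').2
    have hw''S1 : w'' ∉ S1 := hB2fS1 w'' hw''B2f
    have hw''v : w'' ≠ v := fun h => hvB2 (h ▸ (hmemB2f w'').1 hw''B2f)
    obtain ⟨Q'', hQ''card, hQ''clique, hQ''avoid⟩ := key w'' hw''S1 hw''v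
    have hw''Q'' : w'' ∉ Q'' := fun h => (hQ''avoid w'' h).2.2 rfl
    have hQ''S1 : ∀ q ∈ Q'', q ∉ S1 := fun q hq => (hQ''avoid q hq).1
    by_cases hsub2 : ∀ q ∈ Q'', q ∈ insert x B2f
    · -- Q'' = (insert x B2f).erase w'', so w and x are adjacent
      have hQ''sub : Q'' ⊆ (insert x B2f).erase w'' := fun q hq =>
        Finset.mem_erase.2 ⟨fun h => hw''Q'' (h ▸ hq), hsub2 q hq⟩
      have hicard : ((insert x B2f).erase w'').card = p2 := by
        rw [Finset.card_erase_of_mem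
          (Finset.mem_insert_of_mem hw''B2f), Finset.card_insert_of_notMem hxB2f, hB2fcard]
        omega
      have hQ''eq : Q'' = (insert x B2f).erase w'' :=
        Finset.eq_of_subset_of_card_le hQ''sub (by omega)
      have hwQ'' : w ∈ Q'' := by
        rw [hQ''eq]
        exact Finset.mem_erase.2 ⟨fun h => (Finset.mem_erase.1 hw'').1 h.symm,
          Finset.mem_insert_of_mem hw⟩
      have hxQ'' : x ∈ Q'' := by
        rw [hQ''eq]
        exact Finset.mem_erase.2 ⟨fun h => hxB2f (h ▸ hw''B2f), Finset.mem_insert_self _ _⟩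
      have hwx : Gs.Adj w x := hQ''clique w hwQ'' x hxQ'' (fun h => hxB2f (h ▸ hw))
      set E : Finset (Sym2 V) := (edgesOf B2f ∪ EX) ∪ {s(w, x)} with hE
      have hwxEX : s(w, x) ∉ EX := by
        intro h
        obtain ⟨b, hb, hbb⟩ := Finset.mem_image.1 h
        -- hbb : s(x, b) = s(w, x)
        rw [Sym2.eq_iff] at hbb
        rcases hbb with ⟨h1, -⟩ | ⟨-, h2⟩
        · exact hxB2f (h1 ▸ hw)
        · exact (Finset.mem_erase.1 hb).1 h2
      have hwxB : s(w, x) ∉ edgesOf B2f := fun h =>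
        hxB2f ((mem_edgesOf.1 h).2 x (Sym2.mem_mk_right w x))
      have hEcard : E.card = p2.choose 2 + (p2 - 1) + 1 := by
        rw [hE, Finset.card_union_of_disjoint, Finset.card_union_of_disjoint hEXdisj,
          card_edgesOf, hB2fcard, hEXcard, Finset.card_singleton]
        rw [Finset.disjoint_singleton_right, Finset.mem_union]
        push_neg
        exact ⟨hwxB, hwxEX⟩
      have hgoal : (p2 + 1).choose 2 ≤ E.card := by
        rw [hEcard, choose_two_succ]
        omega
      refine le_trans hgoal (card_le_ncard_edgeSet Gs S1 E ?_)
      intro e he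
      rcases Finset.mem_union.1 he with h | h
      · rcases Finset.mem_union.1 h with h' | h'
        · exact hvalid B2f hB2fadj hB2fS1 e h'
        · exact hEXvalid e h'
      · rw [Finset.mem_singleton] at h
        subst h
        refine ⟨hwx, ?_⟩
        intro z hz
        rcases Sym2.mem_iff.1 hz with rfl | rfl
        · exact hwS1
        · exact hxS1
    · -- Q'' has a vertex outside insert x B2f
      push_neg at hsub2
      obtain ⟨y, hyQ'', hyout⟩ := hsub2
      have hyx : y ≠ x := fun h => hyout (h ▸ Finset.mem_insert_self _ _)
      have hyB2f : y ∉ B2f := fun h => hyout (Finset.mem_insert_of_mem h)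
      have hyS1 : y ∉ S1 := hQ''S1 y hyQ''
      set EY : Finset (Sym2 V) := (Q''.erase y).image (fun q => s(y, q)) with hEY
      have hEYcard : EY.card = p2 - 1 := by
        rw [hEY, Finset.card_image_of_injOn, Finset.card_erase_of_mem hyQ'', hQ''card]
        intro b hb b' hb' hbb
        rw [Sym2.eq_iff] at hbb
        rcases hbb with ⟨-, h⟩ | ⟨h, h'⟩
        · exact h
        · exact absurd h' (Finset.mem_erase.1 hb).1
      have hEYvalid : ∀ e ∈ EY, e ∈ Gs.edgeSet ∧ ∀ z ∈ e, z ∈ S1ᶜ := by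
        intro e he
        obtain ⟨q, hq, rfl⟩ := Finset.mem_image.1 he
        have hqQ'' : q ∈ Q'' := (Finset.mem_erase.1 hq).2
        refine ⟨hQ''clique y hyQ'' q hqQ'' (fun h => (Finset.mem_erase.1 hq).1 h.symm), ?_⟩
        intro z hz
        rcases Sym2.mem_iff.1 hz with rfl | rfl
        · exact hyS1
        · exact hQ''S1 _ hqQ''
      have hEYdisjB : Disjoint (edgesOf B2f) EY := by
        rw [Finset.disjoint_right]
        intro e he he'
        obtain ⟨q, hq, rfl⟩ := Finset.mem_image.1 he
        exact hyB2f ((mem_edgesOf.1 he').2 y (Sym2.mem_mk_left y q))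
      have hEYdisjX : Disjoint EX EY := by
        rw [Finset.disjoint_right]
        intro e he he'
        obtain ⟨q, hq, rfl⟩ := Finset.mem_image.1 he
        obtain ⟨b, hb, hbb⟩ := Finset.mem_image.1 he'
        -- hbb : s(x, b) = s(y, q)
        rw [Sym2.eq_iff] at hbb
        rcases hbb with ⟨h1, -⟩ | ⟨h1, h2⟩
        · exact hyx h1.symm
        · exact hyB2f (h2 ▸ (Finset.mem_erase.1 hb).2)
      set E : Finset (Sym2 V) := (edgesOf B2f ∪ EX) ∪ EY with hE
      have hEcard : E.card = p2.choose 2 + (p2 - 1) + (p2 - 1) := by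
        rw [hE, Finset.card_union_of_disjoint, Finset.card_union_of_disjoint hEXdisj,
          card_edgesOf, hB2fcard, hEXcard, hEYcard]
        rw [Finset.disjoint_union_left]
        exact ⟨hEYdisjB, hEYdisjX⟩
      have hgoal : (p2 + 1).choose 2 ≤ E.card := by
        rw [hEcard, choose_two_succ]
        omega
      refine le_trans hgoal (card_le_ncard_edgeSet Gs S1 E ?_)
      intro e he
      rcases Finset.mem_union.1 he with h | h
      · rcases Finset.mem_union.1 h with h' | h'
        · exact hvalid B2f hB2fadj hB2fS1 e h'
        · exact hEXvalid e h'
      · exact hEYvalid e h
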